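/- Under Assumptions (A1)–(A3), there exists a constant C > 0, depending only on Y(0), φ, the drift b (through c1, c2, p, y_*, γ), λ and T (in particular not on Z or Λ), such that for every noise path Z with Hölder constant Λ, the pathwise solution Y satisfies |Y(t) − Y(s)| ≤ C·(1 + Λ^{(p + γλ + λ − 1)/(γλ+λ−1)})·|t − s|^λ for all s, t ∈ [0,T]. -/

import Mathlib

/-
Write `q = γλ + λ - 1 > 0`. In time `u` the noise and the boundary move by at most `(Λ + K) u^λ`,
while within distance `H` of the boundary the drift pushes away at rate at least `c₂ / H^γ`. By
weighted AM–GM, `(Λ + K) u^λ ≤ H/2 + (c₂ / H^γ) u` once `(Λ + K) H^q ≲ c₂^λ`, so a solution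
started at distance `H ≍ max(1, Λ)^(-1/q)` never comes closer than `H/2` to the boundary. There
(A2) gives `|b(t, y)| ≲ H^(-p) + |y|` with a Lipschitz constant independent of `Λ`; Grönwall applied
to `Y - Z` then bounds `Y`, hence the drift, by a multiple of `max(1, Λ)^(p/q + 1)`, and the Hölder
bound follows from `|∫ₛᵗ b| ≤ sup |b| · |t - s|`.
-/

open MeasureTheory Set Real Filter Topology

lemma pos_of_one_div_sub_one_lt {lam gam : ℝ} (hlam0 : 0 < lam) (hlam1 : lam < 1)
    (hgam : 1 / lam - 1 < gam) : 0 ≤ gam ∧ 0 < gam * lam + lam - 1 :=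
  ⟨by linarith [(one_lt_div hlam0).2 hlam1],
    by linarith [(div_lt_iff₀ hlam0).1 (sub_lt_iff_lt_add.1 hgam)]⟩

lemma mul_rpow_le_add_mul {A M B x lam : ℝ} (hlam0 : 0 ≤ lam) (hlam1 : lam ≤ 1) (hM : 0 ≤ M)
    (hB : 0 ≤ B) (hx : 0 ≤ x) (hA : A ≤ M ^ (1 - lam) * B ^ lam) :
    A * x ^ lam ≤ M + B * x := by
  have hBx : 0 ≤ B * x := mul_nonneg hB hx
  calc A * x ^ lam ≤ M ^ (1 - lam) * B ^ lam * x ^ lam := by gcongr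
    _ = M ^ (1 - lam) * (B * x) ^ lam := by rw [mul_rpow hB hx, mul_assoc]
    _ ≤ (1 - lam) * M + lam * (B * x) :=
        geom_mean_le_arith_mean2_weighted (by linarith) hlam0 hM hBx (by ring)
    _ ≤ M + B * x := by nlinarith

lemma half_rpow_mul_div_rpow_eq {H c lam gam : ℝ} (hH : 0 < H) (hc : 0 ≤ c) :
    (H / 2) ^ (1 - lam) * (c / H ^ gam) ^ lam
      = 2 ^ (lam - 1) * c ^ lam / H ^ (gam * lam + lam - 1) := by
  rw [div_rpow hH.le zero_le_two, div_rpow hc (rpow_nonneg hH.le _), ← rpow_mul hH.le,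
    show gam * lam + lam - 1 = gam * lam - (1 - lam) by ring, rpow_sub hH (gam * lam),
    show lam - 1 = -(1 - lam) by ring, rpow_neg zero_le_two]
  field_simp

lemma max_one_rpow_le_one_add_rpow {x θ : ℝ} (hx : 0 ≤ x) :
    max 1 x ^ θ ≤ 1 + x ^ θ := by
  rcases max_cases 1 x with ⟨h, -⟩ | ⟨h, -⟩ <;> rw [h]
  · simp [rpow_nonneg hx]
  · linarith [one_rpow θ]

lemma add_mul_div_max_one_rpow_inv_rpow_le {η K Lam q : ℝ} (hη : 0 ≤ η) (hK : 0 ≤ K)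
    (hq : q ≠ 0) :
    (Lam + K) * (η / max 1 Lam ^ q⁻¹) ^ q ≤ (1 + K) * η ^ q := by
  have hρ : 1 ≤ max 1 Lam := le_max_left _ _
  rw [div_rpow hη (by positivity), rpow_inv_rpow (by positivity) hq, mul_div_assoc',
    div_le_iff₀ (by positivity)]
  nlinarith [mul_le_mul_of_nonneg_right (le_max_right 1 Lam) (rpow_nonneg hη q),
    mul_le_mul_of_nonneg_left hρ (mul_nonneg hK (rpow_nonneg hη q))]

lemma exists_pos_le_mul_rpow_le {m c κ q : ℝ} (hm : 0 < m) (hc : 0 < c) (hκ : 0 < κ)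
    (hq : 0 < q) : ∃ η, 0 < η ∧ η ≤ m ∧ c * η ^ q ≤ κ := by
  have hη : 0 < min m ((κ / c) ^ q⁻¹) := lt_min hm (by positivity)
  refine ⟨_, hη, min_le_left _ _, ?_⟩
  have := rpow_le_rpow hη.le (min_le_right m ((κ / c) ^ q⁻¹)) hq.le
  rw [rpow_inv_rpow (by positivity) hq.ne'] at this
  rwa [← le_div_iff₀' hc]

lemma continuousOn_of_abs_sub_le_rpow {f : ℝ → ℝ} {s : Set ℝ} {K lam : ℝ} (hlam : 0 < lam)
    (hf : ∀ x ∈ s, ∀ y ∈ s, |f y - f x| ≤ K * |y - x| ^ lam) : ContinuousOn f s := by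
  intro x hx
  have hlim : Tendsto (fun y => K * |y - x| ^ lam) (𝓝 x) (𝓝 0) := by
    have : Continuous fun y => K * |y - x| ^ lam :=
      ((continuous_id.sub continuous_const).abs.rpow_const fun _ => Or.inr hlam.le).const_mul K
    simpa [zero_rpow hlam.ne'] using this.tendsto x
  rw [ContinuousWithinAt, tendsto_iff_norm_sub_tendsto_zero]
  exact squeeze_zero_norm' (eventually_nhdsWithin_of_forall fun y hy => by
    simpa using hf x hx y hy) (hlim.mono_left nhdsWithin_le_nhds)

lemma le_sub_of_excursion_drop_le {f : ℝ → ℝ} {T H D : ℝ} (hf : ContinuousOn f (Icc 0 T))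
    (h0 : H ≤ f 0)
    (hdrop : ∀ s ∈ Icc 0 T, ∀ t ∈ Icc 0 T, s ≤ t → (∀ r ∈ Ioo s t, f r ≤ H) → f s - D ≤ f t) :
    ∀ t ∈ Icc 0 T, H - D ≤ f t := by
  intro t ht
  set S := Icc 0 t ∩ f ⁻¹' Ici H
  have hS : IsClosed S :=
    (hf.mono (Icc_subset_Icc_right ht.2)).preimage_isClosed_of_isClosed isClosed_Icc isClosed_Ici
  have hbdd : BddAbove S := ⟨t, fun r hr => hr.1.2⟩
  obtain ⟨⟨hσ0, hσt⟩, hσH : H ≤ f (sSup S)⟩ := hS.csSup_mem ⟨0, ⟨le_rfl, ht.1⟩, h0⟩ hbdd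
  have := hdrop _ ⟨hσ0, hσt.trans ht.2⟩ t ht hσt fun r hr => by
    by_contra! h
    exact (le_csSup hbdd ⟨⟨hσ0.trans hr.1.le, hr.2.le⟩, h.le⟩).not_gt hr.1
  linarith

lemma abs_le_of_abs_deriv_le {f f' : ℝ → ℝ} {δ L ε T : ℝ} (hL : 0 < L) (hε : 0 ≤ ε)
    (hf : ContinuousOn f (Icc 0 T)) (hf' : ∀ x ∈ Ico 0 T, HasDerivWithinAt f (f' x) (Ici x) x)
    (h0 : |f 0| ≤ δ) (hbound : ∀ x ∈ Ico 0 T, |f' x| ≤ L * |f x| + ε) :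
    ∀ x ∈ Icc 0 T, |f x| ≤ (δ + ε / L) * exp (L * T) := by
  intro x hx
  have hgr := norm_le_gronwallBound_of_norm_deriv_right_le hf hf' h0 hbound x hx
  rw [gronwallBound_of_K_ne_0 hL.ne', sub_zero] at hgr
  have hexp : exp (L * x) ≤ exp (L * T) := exp_le_exp.2 (by nlinarith [hx.2])
  have hδ : 0 ≤ δ := (abs_nonneg _).trans h0
  have : 0 ≤ ε / L := by positivity
  change |f x| ≤ _ at hgr
  nlinarith [exp_pos (L * x)]

section IntegralEquation

variable {Y Z g : ℝ → ℝ} {Y0 T : ℝ}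

lemma sub_eq_integral_add_sub (hg : ContinuousOn g (Icc 0 T))
    (hY : ∀ t ∈ Icc 0 T, Y t = Y0 + (∫ s in (0:ℝ)..t, g s) + Z t) :
    ∀ s ∈ Icc 0 T, ∀ t ∈ Icc 0 T, Y t - Y s = (∫ u in s..t, g u) + (Z t - Z s) := by
  intro s hs t ht
  have h0 : (0:ℝ) ∈ Icc 0 T := ⟨le_rfl, hs.1.trans hs.2⟩
  have hint : ∀ x ∈ Icc 0 T, IntervalIntegrable g volume 0 x := fun x hx =>
    (hg.mono (uIcc_subset_Icc h0 hx)).intervalIntegrable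
  rw [hY t ht, hY s hs, ← intervalIntegral.integral_interval_sub_left (hint t ht) (hint s hs)]
  ring

lemma abs_le_of_integral_eq {L a z : ℝ} (hL : 0 < L) (ha : 0 ≤ a)
    (hg : ContinuousOn g (Icc 0 T))
    (hY : ∀ t ∈ Icc 0 T, Y t = Y0 + (∫ s in (0:ℝ)..t, g s) + Z t)
    (hgY : ∀ t ∈ Icc 0 T, |g t| ≤ a + L * |Y t|) (hZ : ∀ t ∈ Icc 0 T, |Z t| ≤ z) :
    ∀ t ∈ Icc 0 T, |Y t| ≤ (|Y0| + (a + L * z) / L) * exp (L * T) + z := by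
  intro t ht
  have hT : 0 ≤ T := ht.1.trans ht.2
  have hz : 0 ≤ z := (abs_nonneg _).trans (hZ t ht)
  -- extend `g` continuously to `ℝ` so that `Y - Z` becomes a primitive
  set g' : ℝ → ℝ := fun s => g (projIcc 0 T hT s)
  have hg' : Continuous g' := hg.comp_continuous (continuous_subtype_val.comp continuous_projIcc)
    fun s => (projIcc 0 T hT s).2
  have hg'g : EqOn g' g (Icc 0 T) := fun s hs => by simp [g', projIcc_of_mem hT hs]
  set X : ℝ → ℝ := fun x => Y0 + ∫ s in (0:ℝ)..x, g' s
  have hX : ∀ x, HasDerivAt X (g' x) x := fun x =>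
    ((hg'.integral_hasStrictDerivAt 0 x).hasDerivAt).const_add Y0
  have hXY : ∀ x ∈ Icc 0 T, X x = Y x - Z x := fun x hx => by
    have : ∫ s in (0:ℝ)..x, g' s = ∫ s in (0:ℝ)..x, g s :=
      intervalIntegral.integral_congr (hg'g.mono (uIcc_subset_Icc ⟨le_rfl, hT⟩ hx))
    simp only [X, this, hY x hx]
    ring
  have hXbound := abs_le_of_abs_deriv_le (f := X) (δ := |Y0|) hL (by positivity : 0 ≤ a + L * z)
    (fun x _ => (hX x).continuousAt.continuousWithinAt) (fun x _ => (hX x).hasDerivWithinAt)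
    (by simp [X]) (fun x hx => by
      have hx' : x ∈ Icc 0 T := Ico_subset_Icc_self hx
      have : |Y x| ≤ |X x| + z := by
        rw [hXY x hx']; linarith [abs_sub_abs_le_abs_sub (Y x) (Z x), hZ x hx']
      rw [hg'g hx']; nlinarith [hgY x hx']) t ht
  rw [hXY t ht] at hXbound
  linarith [abs_sub_abs_le_abs_sub (Y t) (Z t), hZ t ht]

lemma abs_sub_le_of_sub_eq_integral_add {lam G Lam : ℝ} (hlam : lam ≤ 1)
    (hinc : ∀ s ∈ Icc 0 T, ∀ t ∈ Icc 0 T, Y t - Y s = (∫ u in s..t, g u) + (Z t - Z s))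
    (hG : ∀ t ∈ Icc 0 T, |g t| ≤ G)
    (hZ : ∀ s ∈ Icc 0 T, ∀ t ∈ Icc 0 T, |Z t - Z s| ≤ Lam * |t - s| ^ lam) :
    ∀ s ∈ Icc 0 T, ∀ t ∈ Icc 0 T, |Y t - Y s| ≤ (G * T ^ (1 - lam) + Lam) * |t - s| ^ lam := by
  intro s hs t ht
  have hG0 : 0 ≤ G := (abs_nonneg _).trans (hG s hs)
  have hint : |∫ u in s..t, g u| ≤ G * |t - s| :=
    intervalIntegral.norm_integral_le_of_norm_le_const (f := g) fun u hu =>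
      hG u (uIcc_subset_Icc hs ht (uIoc_subset_uIcc hu))
  have hts : |t - s| ≤ |t - s| ^ lam * T ^ (1 - lam) := by
    calc |t - s| = |t - s| ^ lam * |t - s| ^ (1 - lam) := by
          rw [← rpow_add' (abs_nonneg _) (by norm_num), add_sub_cancel, rpow_one]
      _ ≤ |t - s| ^ lam * T ^ (1 - lam) := by
          gcongr
          rw [abs_le]; constructor <;> linarith [hs.1, hs.2, ht.1, ht.2]
  calc |Y t - Y s| ≤ |∫ u in s..t, g u| + |Z t - Z s| := by
        rw [hinc s hs t ht]; exact abs_add_le _ _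
    _ ≤ G * (|t - s| ^ lam * T ^ (1 - lam)) + Lam * |t - s| ^ lam := by
        gcongr
        · exact hint.trans (by gcongr)
        · exact hZ s hs t ht
    _ = (G * T ^ (1 - lam) + Lam) * |t - s| ^ lam := by ring

lemma abs_sub_le_of_abs_le_add_mul {lam L A E Lam : ℝ} (hlam0 : 0 ≤ lam) (hlam1 : lam ≤ 1)
    (hL : 0 < L) (hA : 0 ≤ A) (hE : 1 ≤ E) (hLamE : Lam ≤ E) (hg : ContinuousOn g (Icc 0 T))
    (hY : ∀ t ∈ Icc 0 T, Y t = Y0 + (∫ s in (0:ℝ)..t, g s) + Z t) (hZ0 : Z 0 = 0)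
    (hZ : ∀ s ∈ Icc 0 T, ∀ t ∈ Icc 0 T, |Z t - Z s| ≤ Lam * |t - s| ^ lam)
    (hgY : ∀ t ∈ Icc 0 T, |g t| ≤ A * E + L * |Y t|) :
    ∀ s ∈ Icc 0 T, ∀ t ∈ Icc 0 T, |Y t - Y s| ≤
      ((A + L * ((|Y0| + (A + L * T ^ lam) / L) * exp (L * T) + T ^ lam)) * T ^ (1 - lam) + 1)
        * E * |t - s| ^ lam := by
  set B := (|Y0| + (A + L * T ^ lam) / L) * exp (L * T) + T ^ lam
  have hZbound : ∀ t ∈ Icc 0 T, |Z t| ≤ T ^ lam * E := fun t ht => by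
    have h0 : (0:ℝ) ∈ Icc 0 T := ⟨le_rfl, ht.1.trans ht.2⟩
    have hZt := hZ 0 h0 t ht
    rw [hZ0, sub_zero, sub_zero, abs_of_nonneg ht.1] at hZt
    calc |Z t| ≤ Lam * t ^ lam := hZt
      _ ≤ E * t ^ lam := mul_le_mul_of_nonneg_right hLamE (rpow_nonneg ht.1 _)
      _ ≤ E * T ^ lam := mul_le_mul_of_nonneg_left (rpow_le_rpow ht.1 ht.2 hlam0) (by linarith)
      _ = T ^ lam * E := mul_comm _ _
  have hYB : ∀ t ∈ Icc 0 T, |Y t| ≤ B * E := fun t ht => by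
    calc |Y t| ≤ (|Y0| + (A * E + L * (T ^ lam * E)) / L) * exp (L * T) + T ^ lam * E :=
          abs_le_of_integral_eq hL (by positivity) hg hY hgY hZbound t ht
      _ = (|Y0| + (A + L * T ^ lam) / L * E) * exp (L * T) + T ^ lam * E := by ring
      _ ≤ (|Y0| * E + (A + L * T ^ lam) / L * E) * exp (L * T) + T ^ lam * E := by
          gcongr
          exact le_mul_of_one_le_right (abs_nonneg _) hE
      _ = B * E := by ring
  have hG : ∀ t ∈ Icc 0 T, |g t| ≤ (A + L * B) * E := fun t ht => by
    nlinarith [hgY t ht, hYB t ht]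
  intro s hs t ht
  calc |Y t - Y s| ≤ ((A + L * B) * E * T ^ (1 - lam) + Lam) * |t - s| ^ lam :=
        abs_sub_le_of_sub_eq_integral_add hlam1 (sub_eq_integral_add_sub hg hY) hG hZ s hs t ht
    _ ≤ ((A + L * B) * T ^ (1 - lam) + 1) * E * |t - s| ^ lam := by
        gcongr
        linarith

end IntegralEquation

lemma half_le_sub_of_repulsive_drift {T lam gam c2 ystar K Lam H : ℝ} {phi Y Z : ℝ → ℝ}
    {b : ℝ → ℝ → ℝ} (hlam0 : 0 ≤ lam) (hlam1 : lam ≤ 1) (hgam : 0 ≤ gam) (hc2 : 0 ≤ c2)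
    (hphi : ContinuousOn phi (Icc 0 T))
    (hphiH : ∀ s ∈ Icc 0 T, ∀ t ∈ Icc 0 T, |phi t - phi s| ≤ K * |t - s| ^ lam)
    (hZ : ∀ s ∈ Icc 0 T, ∀ t ∈ Icc 0 T, |Z t - Z s| ≤ Lam * |t - s| ^ lam)
    (hY : ContinuousOn Y (Icc 0 T)) (hYphi : ∀ t ∈ Icc 0 T, phi t < Y t)
    (hg : ContinuousOn (fun u => b u (Y u)) (Icc 0 T))
    (hinc : ∀ s ∈ Icc 0 T, ∀ t ∈ Icc 0 T, Y t - Y s = (∫ u in s..t, b u (Y u)) + (Z t - Z s))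
    (hA3 : ∀ t ∈ Icc 0 T, ∀ y, phi t < y → y ≤ phi t + ystar → c2 / (y - phi t) ^ gam ≤ b t y)
    (hH : 0 < H) (hH0 : H ≤ Y 0 - phi 0) (hHy : H ≤ ystar)
    (hscale : (Lam + K) * H ^ (gam * lam + lam - 1) ≤ 2 ^ (lam - 1) * c2 ^ lam) :
    ∀ t ∈ Icc 0 T, H / 2 ≤ Y t - phi t := by
  have hB : 0 ≤ c2 / H ^ gam := by positivity
  -- in time `u`, noise and boundary move by `(Lam + K) u ^ lam`, the drift by `≥ u c2 / H ^ gam`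
  have hdrift_wins : ∀ u, 0 ≤ u → (Lam + K) * u ^ lam ≤ H / 2 + c2 / H ^ gam * u := by
    refine fun u hu => mul_rpow_le_add_mul hlam0 hlam1 (by positivity) hB hu ?_
    rw [half_rpow_mul_div_rpow_eq hH hc2, le_div_iff₀ (rpow_pos_of_pos hH _)]
    exact hscale
  have hbarrier := le_sub_of_excursion_drop_le (f := fun t => Y t - phi t) (D := H / 2)
      (hY.sub hphi) hH0 fun s hs t ht hst hexc => by
    have hlow : ∀ r ∈ Ioo s t, c2 / H ^ gam ≤ b r (Y r) := fun r hr => by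
      have hr' : r ∈ Icc 0 T := ⟨hs.1.trans hr.1.le, hr.2.le.trans ht.2⟩
      have hpos := sub_pos.2 (hYphi r hr')
      have hle : Y r - phi r ≤ H := hexc r hr
      refine le_trans ?_ (hA3 r hr' (Y r) (hYphi r hr') (by linarith))
      gcongr
    have hint : (t - s) * (c2 / H ^ gam) ≤ ∫ u in s..t, b u (Y u) := by
      have := intervalIntegral.integral_mono_on_of_le_Ioo hst (intervalIntegrable_const (μ := volume))
        (hg.mono (uIcc_subset_Icc hs ht)).intervalIntegrable hlow
      simpa [mul_div_assoc] using this
    have habs : |t - s| = t - s := abs_of_nonneg (sub_nonneg.2 hst)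
    have hZst := hZ s hs t ht
    have hphist := hphiH s hs t ht
    rw [habs] at hZst hphist
    have := hdrift_wins (t - s) (sub_nonneg.2 hst)
    have := hinc s hs t ht
    linarith [(abs_le.1 hZst).1, (abs_le.1 hphist).2]
  intro t ht
  linarith [hbarrier t ht]

lemma exists_abs_drift_le {T lam c1 p : ℝ} {phi : ℝ → ℝ} {b : ℝ → ℝ → ℝ} (hlam : 0 < lam)
    (hc1 : 0 ≤ c1) (hphi : ContinuousOn phi (Icc 0 T))
    (hA2cont : ContinuousOn (fun q : ℝ × ℝ => b q.1 q.2)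
      {q : ℝ × ℝ | q.1 ∈ Icc (0:ℝ) T ∧ phi q.1 < q.2})
    (hA2lip : ∀ ε : ℝ, 0 < ε → ε < 1 →
      ∀ t1 ∈ Icc (0:ℝ) T, ∀ t2 ∈ Icc (0:ℝ) T, ∀ y1 y2 : ℝ,
        phi t1 + ε < y1 → phi t2 + ε < y2 →
        |b t1 y1 - b t2 y2| ≤ c1 / ε ^ p * (|y1 - y2| + |t1 - t2| ^ lam)) :
    ∃ β, 0 ≤ β ∧ ∀ δ, 0 < δ → δ ≤ 1 → ∀ t ∈ Icc 0 T, ∀ y, phi t + δ ≤ y →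
      |b t y| ≤ β + c1 * (2 / δ) ^ p + c1 * 2 ^ p * |y| := by
  have hF : ContinuousOn (fun t => |b t (phi t + 1)| + c1 * 2 ^ p * (|phi t| + 1)) (Icc 0 T) := by
    have : ContinuousOn (fun t => b t (phi t + 1)) (Icc 0 T) :=
      hA2cont.comp (continuousOn_id.prodMk (hphi.add continuousOn_const)) fun t ht => ⟨ht, by simp⟩
    exact this.abs.add (continuousOn_const.mul (hphi.abs.add continuousOn_const))
  obtain ⟨β, hβ⟩ := isCompact_Icc.exists_bound_of_continuousOn hF
  refine ⟨max β 0, le_max_right _ _, fun δ hδ hδ1 t ht y hy => ?_⟩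
  have hFt := (le_abs_self _).trans ((hβ t ht).trans (le_max_left β 0))
  have hc1p : 0 ≤ c1 * 2 ^ p := by positivity
  have hc1δ : 0 ≤ c1 * (2 / δ) ^ p := by positivity
  have hdiag : |t - t| ^ lam = 0 := by simp [zero_rpow hlam.ne']
  -- comparing with `b t (phi t + 1)`, the Lipschitz constant far from the boundary is `δ`-free
  rcases le_total y (phi t + 1) with hnear | hfar
  · have hlip := hA2lip (δ / 2) (by positivity) (by linarith) t ht t ht y (phi t + 1)
      (by linarith) (by linarith)
    rw [hdiag, add_zero, div_eq_mul_inv, ← inv_rpow (by positivity), inv_div] at hlip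
    have hd : |y - (phi t + 1)| ≤ 1 := abs_le.2 ⟨by linarith, by linarith⟩
    have := mul_le_mul_of_nonneg_left hd hc1δ
    have := abs_sub_abs_le_abs_sub (b t y) (b t (phi t + 1))
    nlinarith [abs_nonneg y, abs_nonneg (phi t)]
  · have hlip := hA2lip (1 / 2) (by norm_num) (by norm_num) t ht t ht y (phi t + 1)
      (by linarith) (by linarith)
    rw [hdiag, add_zero, one_div, inv_rpow zero_le_two, div_inv_eq_mul] at hlip
    have hd : |y - (phi t + 1)| ≤ |y| + |phi t| + 1 := by
      have := abs_sub y (phi t + 1)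
      have := abs_add_le (phi t) 1
      simp only [abs_one] at this
      linarith
    have := mul_le_mul_of_nonneg_left hd hc1p
    have := abs_sub_abs_le_abs_sub (b t y) (b t (phi t + 1))
    nlinarith

theorem stmt_14
    (T lam : ℝ) (hT : 0 < T) (hlam : lam ∈ Set.Ioo (0:ℝ) 1)
    (phi : ℝ → ℝ) (K : ℝ) (hK : 0 < K)
    (hphiH : ∀ s ∈ Set.Icc (0:ℝ) T, ∀ t ∈ Set.Icc (0:ℝ) T, |phi t - phi s| ≤ K * |t - s| ^ lam)
    (b : ℝ → ℝ → ℝ) (c1 p c2 ystar gam : ℝ)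
    (hc1 : 0 < c1) (hp : 1 < p) (hc2 : 0 < c2) (hystar : 0 < ystar)
    (hgam : 1 / lam - 1 < gam)
    (hA2cont : ContinuousOn (fun q : ℝ × ℝ => b q.1 q.2)
      {q : ℝ × ℝ | q.1 ∈ Set.Icc (0:ℝ) T ∧ phi q.1 < q.2})
    (hA2lip : ∀ ε : ℝ, 0 < ε → ε < 1 →
      ∀ t1 ∈ Set.Icc (0:ℝ) T, ∀ t2 ∈ Set.Icc (0:ℝ) T, ∀ y1 y2 : ℝ,
        phi t1 + ε < y1 → phi t2 + ε < y2 →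
        |b t1 y1 - b t2 y2| ≤ c1 / ε ^ p * (|y1 - y2| + |t1 - t2| ^ lam))
    (hA3 : ∀ t ∈ Set.Icc (0:ℝ) T, ∀ y : ℝ, phi t < y → y ≤ phi t + ystar →
      c2 / (y - phi t) ^ gam ≤ b t y)
    (Y0 : ℝ) (hA1 : phi 0 < Y0)
    :
    ∃ C : ℝ, 0 < C ∧
      ∀ (Z : ℝ → ℝ) (Lam : ℝ), 0 < Lam → Z 0 = 0 →
        (∀ s ∈ Set.Icc (0:ℝ) T, ∀ t ∈ Set.Icc (0:ℝ) T, |Z t - Z s| ≤ Lam * |t - s| ^ lam) →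
        ∀ Y : ℝ → ℝ, ContinuousOn Y (Set.Icc (0:ℝ) T) →
          (∀ t ∈ Set.Icc (0:ℝ) T, phi t < Y t) →
          (∀ t ∈ Set.Icc (0:ℝ) T, Y t = Y0 + (∫ s in (0:ℝ)..t, b s (Y s)) + Z t) →
          ∀ s ∈ Set.Icc (0:ℝ) T, ∀ t ∈ Set.Icc (0:ℝ) T,
            |Y t - Y s| ≤
              C * (1 + Lam ^ ((p + gam * lam + lam - 1) / (gam * lam + lam - 1)))
                * |t - s| ^ lam := by
  obtain ⟨hlam0, hlam1⟩ := hlam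
  obtain ⟨hgam0, hq⟩ := pos_of_one_div_sub_one_lt hlam0 hlam1 hgam
  set q := gam * lam + lam - 1
  rw [show (p + gam * lam + lam - 1) / q = p / q + 1 by field_simp; ring]
  have hphi := continuousOn_of_abs_sub_le_rpow hlam0 hphiH
  obtain ⟨β, hβ, hdrift⟩ := exists_abs_drift_le hlam0 hc1.le hphi hA2cont hA2lip
  obtain ⟨η, hη, hηm, hηκ⟩ := exists_pos_le_mul_rpow_le (m := min (min (Y0 - phi 0) ystar) 1)
    (lt_min (lt_min (by linarith) hystar) one_pos) (by positivity : 0 < 1 + K)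
    (by positivity : 0 < 2 ^ (lam - 1) * c2 ^ lam) hq
  set L := c1 * 2 ^ p
  set A := β + c1 * (4 / η) ^ p
  refine ⟨(A + L * ((|Y0| + (A + L * T ^ lam) / L) * exp (L * T) + T ^ lam)) * T ^ (1 - lam) + 1,
    by positivity, fun Z Lam hLam hZ0 hZ Y hY hYphi hYeq s hs t ht => ?_⟩
  set ρ := max 1 Lam
  have hρ : 1 ≤ ρ := le_max_left _ _
  have hE : 1 ≤ ρ ^ (p / q + 1) := one_le_rpow hρ (by positivity)
  set H := η / ρ ^ q⁻¹
  obtain ⟨⟨hHY, hHy⟩, hH1⟩ : (H ≤ Y0 - phi 0 ∧ H ≤ ystar) ∧ H ≤ 1 := by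
    simpa only [le_min_iff] using (div_le_self hη.le (one_le_rpow hρ (by positivity))).trans hηm
  have hg : ContinuousOn (fun u => b u (Y u)) (Icc 0 T) :=
    hA2cont.comp (continuousOn_id.prodMk hY) fun u hu => ⟨hu, hYphi u hu⟩
  have hY0 : Y 0 = Y0 := by simpa [hZ0] using hYeq 0 ⟨le_rfl, hT.le⟩
  have hbar := half_le_sub_of_repulsive_drift hlam0.le hlam1.le hgam0 hc2.le hphi hphiH hZ hY
    hYphi hg (sub_eq_integral_add_sub hg hYeq) hA3 (by positivity) (hY0 ▸ hHY) hHy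
    ((add_mul_div_max_one_rpow_inv_rpow_le hη.le hK.le hq.ne').trans hηκ)
  have hgY : ∀ u ∈ Icc 0 T, |b u (Y u)| ≤ A * ρ ^ (p / q + 1) + L * |Y u| := fun u hu => by
    have h := hdrift (H / 2) (by positivity) (by linarith) u hu (Y u) (by linarith [hbar u hu])
    rw [show 2 / (H / 2) = 4 / η * ρ ^ q⁻¹ by simp only [H]; field_simp; norm_num,
      mul_rpow (by positivity) (by positivity), ← rpow_mul (by positivity), inv_mul_eq_div] at h
    have hpE : ρ ^ (p / q) ≤ ρ ^ (p / q + 1) := rpow_le_rpow_of_exponent_le hρ (by linarith)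
    calc |b u (Y u)| ≤ β * 1 + c1 * (4 / η) ^ p * ρ ^ (p / q) + L * |Y u| := by linarith
      _ ≤ β * ρ ^ (p / q + 1) + c1 * (4 / η) ^ p * ρ ^ (p / q + 1) + L * |Y u| := by gcongr
      _ = A * ρ ^ (p / q + 1) + L * |Y u| := by ring
  calc |Y t - Y s| ≤ _ := abs_sub_le_of_abs_le_add_mul hlam0.le hlam1.le (by positivity)
        (by positivity) hE ((le_max_right _ _).trans (self_le_rpow_of_one_le hρ
          (by linarith [div_pos (by linarith : (0:ℝ) < p) hq]))) hg hYeq hZ0 hZ hgY s hs t ht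
    _ ≤ _ := by gcongr; exact max_one_rpow_le_one_add_rpow hLam.le
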